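/- Fix σ > 0 and x ∈ ℂ with |x| = 1. If y = x + σ·w with w ~ CN(0,1), then the variance of the mismatched information density is Var(i_M(x;y)) = 1 − 1/(1 + 1/σ²)². -/

import Mathlib

/-!
With `y = x + σw`, the information density is a real quadratic polynomial in `w`,
`i_M = const - |w|² / (1 + σ²) + 2σ/(1 + σ²) · Re(x̄ w)`, so for `w = a + ib` it is a sum of
quadratics `α t² + β t` in the independent coordinates `a, b ~ N(0, 1/2)`. For `t ~ N(0, v)` one
has `E t³ = 0` and `E t⁴ = 3v²` (read off the moment generating function `exp (v t² / 2)`), hence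
`Var(α t² + β t) = 2α²v² + β²v`. Summing over the two coordinates, with `α = -1/(1 + σ²)` and
`β_a² + β_b² = 4σ²/(1 + σ²)²`, gives `Var i_M = (1 + 2σ²)/(1 + σ²)² = 1 - σ⁴/(1 + σ²)²`.
-/

open MeasureTheory ProbabilityTheory

/-- The law of a standard complex Gaussian `w = a + i·b`, where `a` and `b` are
independent real Gaussians with mean `0` and variance `1/2`. -/
noncomputable def stdComplexGaussian : Measure ℂ :=
  Measure.map (fun q : ℝ × ℝ => (q.1 : ℂ) + (q.2 : ℂ) * Complex.I)
    ((gaussianReal 0 (1 / 2)).prod (gaussianReal 0 (1 / 2)))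

/-- For `σ > 0` and `x, y ∈ ℂ`, `p_σ(y|x) = (1/(πσ²))·exp(−|y−x|²/σ²)` and
`q_σ(y) = (1/(π(1+σ²)))·exp(−|y|²/(1+σ²))`; the mismatched information density is
`i_M(x;y) = ln (p_σ(y|x) / q_σ(y))`. -/
noncomputable def infoDensity (σ : ℝ) (x y : ℂ) : ℝ :=
  Real.log ((1 / (Real.pi * σ ^ 2) * Real.exp (-‖y - x‖ ^ 2 / σ ^ 2)) /
            (1 / (Real.pi * (1 + σ ^ 2)) * Real.exp (-‖y‖ ^ 2 / (1 + σ ^ 2))))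

open Real
open scoped NNReal

section GaussianMoments

lemma hasDerivAt_mul_exp_mul_sq_div_two {P : ℝ → ℝ} {P' t : ℝ} (v : ℝ)
    (hP : HasDerivAt P P' t) :
    HasDerivAt (fun s ↦ P s * exp (v * s ^ 2 / 2))
      ((P' + v * t * P t) * exp (v * t ^ 2 / 2)) t := by
  have he : HasDerivAt (fun s ↦ exp (v * s ^ 2 / 2)) (exp (v * t ^ 2 / 2) * (v * t)) t := by
    convert (((hasDerivAt_pow 2 t).const_mul v).div_const 2).exp using 1
    push_cast; ring
  exact (hP.fun_mul he).congr_deriv (by ring)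

lemma iteratedDeriv_two_exp_mul_sq_div_two (v : ℝ) :
    iteratedDeriv 2 (fun t ↦ exp (v * t ^ 2 / 2)) =
      fun t ↦ (v + v ^ 2 * t ^ 2) * exp (v * t ^ 2 / 2) := by
  have h₁ : deriv (fun t ↦ exp (v * t ^ 2 / 2)) = fun t ↦ v * t * exp (v * t ^ 2 / 2) := by
    funext t
    simpa using (hasDerivAt_mul_exp_mul_sq_div_two v (hasDerivAt_const t (1 : ℝ))).deriv
  rw [iteratedDeriv_succ, iteratedDeriv_one, h₁]
  funext t
  rw [(hasDerivAt_mul_exp_mul_sq_div_two (P := fun s ↦ v * s) v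
    ((hasDerivAt_id' t).const_mul v)).deriv]
  ring

lemma iteratedDeriv_three_exp_mul_sq_div_two (v : ℝ) :
    iteratedDeriv 3 (fun t ↦ exp (v * t ^ 2 / 2)) =
      fun t ↦ (3 * v ^ 2 * t + v ^ 3 * t ^ 3) * exp (v * t ^ 2 / 2) := by
  rw [iteratedDeriv_succ, iteratedDeriv_two_exp_mul_sq_div_two]
  funext t
  rw [(hasDerivAt_mul_exp_mul_sq_div_two (P := fun s ↦ v + v ^ 2 * s ^ 2) v
    (((hasDerivAt_pow 2 t).const_mul (v ^ 2)).const_add v)).deriv]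
  ring

lemma iteratedDeriv_four_exp_mul_sq_div_two (v : ℝ) :
    iteratedDeriv 4 (fun t ↦ exp (v * t ^ 2 / 2)) =
      fun t ↦ (3 * v ^ 2 + 6 * v ^ 3 * t ^ 2 + v ^ 4 * t ^ 4) * exp (v * t ^ 2 / 2) := by
  rw [iteratedDeriv_succ, iteratedDeriv_three_exp_mul_sq_div_two]
  funext t
  rw [(hasDerivAt_mul_exp_mul_sq_div_two (P := fun s ↦ 3 * v ^ 2 * s + v ^ 3 * s ^ 3) v
    (((hasDerivAt_id' t).const_mul (3 * v ^ 2)).add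
      ((hasDerivAt_pow 3 t).const_mul (v ^ 3)))).deriv]
  ring

variable {v : ℝ≥0}

lemma integral_pow_gaussianReal_eq_iteratedDeriv (n : ℕ) :
    ∫ x, x ^ n ∂gaussianReal 0 v = iteratedDeriv n (fun t ↦ exp (v * t ^ 2 / 2)) 0 := by
  have h := iteratedDeriv_mgf_zero (X := fun x : ℝ ↦ x) (μ := gaussianReal 0 v) (by simp) n
  simpa [mgf_fun_id_gaussianReal] using h.symm

lemma integral_sq_gaussianReal : ∫ x, x ^ 2 ∂gaussianReal 0 v = v := by
  simp [integral_pow_gaussianReal_eq_iteratedDeriv, iteratedDeriv_two_exp_mul_sq_div_two]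

lemma integral_pow_three_gaussianReal : ∫ x, x ^ 3 ∂gaussianReal 0 v = 0 := by
  simp [integral_pow_gaussianReal_eq_iteratedDeriv, iteratedDeriv_three_exp_mul_sq_div_two]

lemma integral_pow_four_gaussianReal : ∫ x, x ^ 4 ∂gaussianReal 0 v = 3 * v ^ 2 := by
  simp [integral_pow_gaussianReal_eq_iteratedDeriv, iteratedDeriv_four_exp_mul_sq_div_two]

lemma integrable_pow_gaussianReal (μ : ℝ) (n : ℕ) :
    Integrable (fun x ↦ x ^ n) (gaussianReal μ v) := by
  rcases n.eq_zero_or_pos with rfl | hn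
  · simp
  refine (integrable_norm_iff (by fun_prop)).mp ?_
  simpa [norm_pow] using (memLp_id_gaussianReal (μ := μ) (v := v) n).integrable_norm_pow hn.ne'

lemma memLp_two_pow_gaussianReal (μ : ℝ) (n : ℕ) :
    MemLp (fun x ↦ x ^ n) 2 (gaussianReal μ v) :=
  (memLp_two_iff_integrable_sq (by fun_prop)).mpr <| by
    simpa [← pow_mul] using integrable_pow_gaussianReal μ (n * 2)

lemma memLp_quadratic_gaussianReal (μ α β : ℝ) :
    MemLp (fun x ↦ α * x ^ 2 + β * x) 2 (gaussianReal μ v) :=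
  ((memLp_two_pow_gaussianReal μ 2).const_mul α).add ((memLp_id_gaussianReal 2).const_mul β)

lemma variance_quadratic_gaussianReal (α β : ℝ) :
    Var[fun x ↦ α * x ^ 2 + β * x; gaussianReal 0 v] = 2 * α ^ 2 * v ^ 2 + β ^ 2 * v := by
  have h₁ : MemLp (fun x : ℝ ↦ x) 2 (gaussianReal 0 v) := memLp_id_gaussianReal 2
  have h₂ := memLp_two_pow_gaussianReal (v := v) 0 2
  have hvar : Var[fun x ↦ x ^ 2; gaussianReal 0 v] = 2 * v ^ 2 := by
    rw [variance_eq_sub h₂]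
    simp only [Pi.pow_apply, ← pow_mul]
    rw [integral_pow_four_gaussianReal, integral_sq_gaussianReal]
    ring
  have hcov : cov[fun x ↦ x ^ 2, fun x ↦ x; gaussianReal 0 v] = 0 := by
    rw [covariance_eq_sub h₂ h₁]
    simp only [Pi.mul_apply, ← pow_succ]
    simp [integral_pow_three_gaussianReal]
  rw [variance_fun_add (h₂.const_mul α) (h₁.const_mul β), variance_const_mul, variance_const_mul,
    covariance_const_mul_left, covariance_const_mul_right, hvar, hcov,
    variance_fun_id_gaussianReal]
  ring

end GaussianMoments

lemma variance_stdComplexGaussian_quadratic (α : ℝ) (c : ℂ) :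
    Var[fun z ↦ α * ‖z‖ ^ 2 + inner ℝ c z; stdComplexGaussian] = α ^ 2 + ‖c‖ ^ 2 / 2 := by
  have hcoord :
      (fun z ↦ α * ‖z‖ ^ 2 + inner ℝ c z) ∘ (fun q : ℝ × ℝ ↦ (q.1 : ℂ) + q.2 * Complex.I) =
        fun q ↦ (α * q.1 ^ 2 + c.re * q.1) + (α * q.2 ^ 2 + c.im * q.2) := by
    funext q
    simp [Complex.inner, Complex.sq_norm, Complex.normSq_apply]
    ring
  rw [stdComplexGaussian, variance_map (by fun_prop) (by fun_prop), hcoord,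
    variance_add_prod (memLp_quadratic_gaussianReal 0 α c.re)
      (memLp_quadratic_gaussianReal 0 α c.im),
    variance_quadratic_gaussianReal, variance_quadratic_gaussianReal, Complex.sq_norm,
    Complex.normSq_apply]
  push_cast
  ring

lemma infoDensity_add_mul {σ : ℝ} (hσ : σ ≠ 0) (x z : ℂ) :
    infoDensity σ x (x + σ * z) =
      -(1 + σ ^ 2)⁻¹ * ‖z‖ ^ 2 + inner ℝ ((2 * σ / (1 + σ ^ 2)) • x) z +
        (log ((1 + σ ^ 2) / σ ^ 2) + ‖x‖ ^ 2 / (1 + σ ^ 2)) := by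
  have hlog : infoDensity σ x (x + σ * z) =
      log ((1 + σ ^ 2) / σ ^ 2) - ‖z‖ ^ 2 + ‖x + σ * z‖ ^ 2 / (1 + σ ^ 2) := by
    have hratio : ∀ A B : ℝ, 1 / (π * σ ^ 2) * exp A / (1 / (π * (1 + σ ^ 2)) * exp B) =
        (1 + σ ^ 2) / σ ^ 2 * exp (A - B) := fun A B ↦ by
      rw [exp_sub]
      field_simp
    have hz : ‖(σ : ℂ) * z‖ ^ 2 = σ ^ 2 * ‖z‖ ^ 2 := by
      rw [norm_mul, Complex.norm_real, Real.norm_eq_abs, mul_pow, sq_abs]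
    rw [infoDensity, add_sub_cancel_left, hz, hratio, log_mul (by positivity) (exp_ne_zero _),
      log_exp]
    field_simp
    ring
  have hexpand : ‖x + σ * z‖ ^ 2 = ‖x‖ ^ 2 + 2 * σ * inner ℝ x z + σ ^ 2 * ‖z‖ ^ 2 := by
    rw [← Complex.real_smul, norm_add_sq_real, real_inner_smul_right, norm_smul, mul_pow,
      Real.norm_eq_abs, sq_abs]
    ring
  rw [hlog, hexpand, real_inner_smul_left]
  field_simp
  ring

/-- **Variance of the mismatched information density.**  Fix `σ > 0` and `x ∈ ℂ` with
`|x| = 1`.  If `y = x + σ·w` with `w ~ CN(0,1)`, then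
`Var(i_M(x;y)) = 1 − 1/(1 + 1/σ²)²`. -/
theorem infoDensity_variance
    {Ω : Type*} [MeasureSpace Ω] [IsProbabilityMeasure (ℙ : Measure Ω)]
    (σ : ℝ) (hσ : 0 < σ) (x : ℂ) (hx : ‖x‖ = 1)
    (w : Ω → ℂ) (hw : Measurable w)
    (hlaw : Measure.map w (ℙ : Measure Ω) = stdComplexGaussian)
    (f : Ω → ℝ) (hf : ∀ ω, f ω = infoDensity σ x (x + (σ : ℂ) * w ω)) :
    variance f (ℙ : Measure Ω) = 1 - 1 / (1 + 1 / σ ^ 2) ^ 2 := by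
  set a := (1 + σ ^ 2)⁻¹
  set c := (2 * σ / (1 + σ ^ 2)) • x
  have hquad : f = fun ω ↦ (-a * ‖w ω‖ ^ 2 + inner ℝ c (w ω)) +
      (log ((1 + σ ^ 2) / σ ^ 2) + ‖x‖ ^ 2 / (1 + σ ^ 2)) :=
    funext fun ω ↦ (hf ω).trans (infoDensity_add_mul hσ.ne' x (w ω))
  calc variance f ℙ = Var[fun ω ↦ -a * ‖w ω‖ ^ 2 + inner ℝ c (w ω); ℙ] := by
        rw [hquad, variance_add_const (by fun_prop)]
    _ = Var[fun z ↦ -a * ‖z‖ ^ 2 + inner ℝ c z; stdComplexGaussian] := by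
        rw [← hlaw, variance_map (by fun_prop) hw.aemeasurable]
        rfl
    _ = a ^ 2 + ‖c‖ ^ 2 / 2 := by rw [variance_stdComplexGaussian_quadratic, neg_sq]
    _ = 1 - 1 / (1 + 1 / σ ^ 2) ^ 2 := by
        rw [norm_smul, hx, Real.norm_eq_abs, abs_of_pos (by positivity)]
        simp only [a]
        field_simp
        ring
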